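/- arXiv:1912.01856 — 4 statements merged into one kernel-verified Lean document; each statement's English description precedes it below -/
import Mathlib

section
/- Let G be a locally compact abelian Hausdorff topological group, W ⊆ G closed and of finite Haar measure, and Q ⊆ Ĝ compact. For every compact set K ⊆ G and every ε > 0 there exist n ∈ ℕ, characters χ_1, …, χ_n ∈ Q, and a partition of Q into Borel sets Q_1, …, Q_n each with compact closure, such that for every f ∈ 𝒢(W,Q)_G one has sup_{g ∈ K} | f(g) − Σ_{j=1}^n c_j(f)·χ_j(g) | ≤ ε, where c_j(f) := ∫_{Q_j} f̂ dλ_{Ĝ}; moreover c_j(f) ≥ 0 for each j and Σ_{j=1}^n c_j(f) = f(0) = 1. -/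
/-!
Fourier inversion turns positive definiteness of `f` into positivity of `F = f̂` as a density:
`∫ F |P|² = ∑ cⱼ c̄ₖ f(gⱼ gₖ⁻¹) ≥ 0` for every trigonometric polynomial `P = ∑ cⱼ χ(gⱼ)`, and by
Stone–Weierstrass the functions `|P|²` approximate any bounded continuous `h ≥ 0` uniformly on the
compact set `Q` carrying `F`, so `∫ F h ≥ 0`. Cover `Q` by finitely many open sets on each of which
all characters stay `ε`-close on `K` to a centre `χⱼ ∈ Q`, and disjointify. The pieces are Boolean
combinations of sets `{φ > 0}` with `φ` continuous, whose indicators are bounded pointwise limits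
of continuous functions, so positivity passes to them by dominated convergence. On each piece
`|∫ F (χ(g) - χⱼ(g))| ≤ ε ∫ F`, and the masses `∫ F` of the pieces add up to `f(1) = 1`.
-/

open MeasureTheory Filter Topology Complex
open scoped ComplexOrder

noncomputable section

variable {G : Type*}

/-- A function is positive definite. -/
def IsPosDefFn [CommGroup G] (f : G → ℂ) : Prop :=
  ∀ (n : ℕ) (c : Fin n → ℂ) (g : Fin n → G),
    0 ≤ ∑ j, ∑ k, c j * (starRingEnd ℂ) (c k) * f (g j / g k)

/-- The Fourier transform of `f : G → ℂ` with respect to Haar measure `μ`. -/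
def fourierTr [CommGroup G] [TopologicalSpace G] [MeasurableSpace G]
    (μ : Measure G) (f : G → ℂ) (χ : PontryaginDual G) : ℂ :=
  ∫ g, f g * (starRingEnd ℂ) ((χ g : ℂ)) ∂μ

/-- The Gorbachev class `𝒢(W,Q)_G`. -/
def gclass [CommGroup G] [TopologicalSpace G] [MeasurableSpace G]
    (μ : Measure G) (W : Set G) (Q : Set (PontryaginDual G)) : Set (G → ℝ) :=
  {f | Continuous f ∧ IsPosDefFn (fun g => (f g : ℂ)) ∧ Integrable f μ ∧
       f 1 = 1 ∧ tsupport (fun g => max (f g) 0) ⊆ W ∧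
       tsupport (fourierTr μ (fun g => (f g : ℂ))) ⊆ Q}

/-- The Delsarte extremal constant `𝒟(W,Q)_G`. -/
def dconst [CommGroup G] [TopologicalSpace G] [MeasurableSpace G]
    (μ : Measure G) (W : Set G) (Q : Set (PontryaginDual G)) : ℝ :=
  sSup ((fun f => ∫ g, f g ∂μ) '' gclass μ W Q)

open Set Function

section IsPositiveOn

variable {X : Type*} [TopologicalSpace X] [MeasurableSpace X] {ν : Measure X} {F : X → ℂ}
  {S : Set X}

def IsPositiveOn (ν : Measure X) (F : X → ℂ) (S : Set X) : Prop :=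
  ∀ h : X → ℝ, Continuous h → 0 ≤ h → BddAbove (range h) → 0 ≤ ∫ x in S, F x * h x ∂ν

theorem IsPositiveOn.setIntegral_nonneg (hS : IsPositiveOn ν F S) : 0 ≤ ∫ x in S, F x ∂ν := by
  simpa using hS (fun _ => 1) continuous_const (fun _ => zero_le_one) ⟨1, by simp [upperBounds]⟩

variable [OpensMeasurableSpace X]

theorem tendsto_min_one_natCast_mul_max_zero (t : ℝ) :
    Tendsto (fun m : ℕ => min 1 (m * max t 0)) atTop (𝓝 ((Ioi 0).indicator 1 t)) := by
  rcases lt_or_ge 0 t with ht | ht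
  · rw [indicator_of_mem (mem_Ioi.mpr ht), Pi.one_apply, max_eq_left ht.le]
    refine tendsto_const_nhds.congr' ?_
    filter_upwards [(tendsto_natCast_atTop_atTop.atTop_mul_const ht).eventually_ge_atTop 1]
      with m hm using (min_eq_left hm).symm
  · simp [indicator_of_notMem (notMem_Ioi.mpr ht), max_eq_right ht]

theorem IsPositiveOn.inter_of_tendsto_indicator (hS : IsPositiveOn ν F S) (hF : Integrable F ν)
    {T : Set X} (hT : MeasurableSet T) {g : ℕ → X → ℝ} (hgc : ∀ m, Continuous (g m))
    (hg0 : ∀ m, 0 ≤ g m) (hg1 : ∀ m, g m ≤ 1)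
    (hlim : ∀ x, Tendsto (g · x) atTop (𝓝 (T.indicator 1 x))) :
    IsPositiveOn ν F (S ∩ T) := by
  rintro h hc h0 ⟨C, hC⟩
  have hhC : ∀ x, h x ≤ C := fun x => hC (mem_range_self x)
  have hgh : ∀ m x, g m x * h x ≤ C := fun m x =>
    (mul_le_of_le_one_left (h0 x) (hg1 m x)).trans (hhC x)
  have hbound : ∀ m x, ‖F x * (g m x * h x : ℝ)‖ ≤ ‖F x‖ * C := fun m x => by
    rw [norm_mul, norm_real, Real.norm_of_nonneg (mul_nonneg (hg0 m x) (h0 x))]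
    gcongr
    exact hgh m x
  have hconv : Tendsto (fun m => ∫ x in S, F x * (g m x * h x : ℝ) ∂ν) atTop
      (𝓝 (∫ x in S, T.indicator (fun x => F x * h x) x ∂ν)) := by
    refine tendsto_integral_of_dominated_convergence (fun x => ‖F x‖ * C)
      (fun m => (hF.aestronglyMeasurable.mul (by fun_prop)).restrict)
      (hF.norm.mul_const C).restrict (fun m => ae_of_all _ (hbound m)) (ae_of_all _ fun x => ?_)
    have := ((continuous_ofReal.tendsto _).comp ((hlim x).mul_const (h x))).const_mul (F x)
    by_cases hx : x ∈ T <;> simpa [hx] using this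
  rw [← setIntegral_indicator hT]
  exact ge_of_tendsto' hconv fun m =>
    hS _ (by fun_prop) (fun x => mul_nonneg (hg0 m x) (h0 x))
      ⟨C, forall_mem_range.mpr (hgh m)⟩

theorem IsPositiveOn.inter_setOf_pos (hS : IsPositiveOn ν F S) (hF : Integrable F ν)
    {φ : X → ℝ} (hφ : Continuous φ) : IsPositiveOn ν F (S ∩ {x | 0 < φ x}) :=
  hS.inter_of_tendsto_indicator hF (measurableSet_lt measurable_const hφ.measurable)
    (g := fun m x => min 1 (m * max (φ x) 0)) (fun m => by fun_prop)
    (fun m x => le_min zero_le_one (by positivity)) (fun m x => min_le_left _ _)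
    (fun x => tendsto_min_one_natCast_mul_max_zero (φ x))

theorem IsPositiveOn.diff_setOf_pos (hS : IsPositiveOn ν F S) (hF : Integrable F ν)
    {φ : X → ℝ} (hφ : Continuous φ) : IsPositiveOn ν F (S \ {x | 0 < φ x}) :=
  hS.inter_of_tendsto_indicator hF (T := {x | 0 < φ x}ᶜ)
    (measurableSet_lt measurable_const hφ.measurable).compl
    (g := fun m x => 1 - min 1 (m * max (φ x) 0)) (fun m => by fun_prop)
    (fun m x => sub_nonneg.mpr (min_le_left _ _))
    (fun m x => sub_le_self _ (le_min zero_le_one (by positivity)))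
    (fun x => by
      rw [indicator_compl]
      exact tendsto_const_nhds.sub (tendsto_min_one_natCast_mul_max_zero (φ x)))

theorem integrableOn_mul_ofReal (hF : Integrable F ν) {r : X → ℝ} (hr : Continuous r) {C : ℝ}
    (hC : ∀ x, |r x| ≤ C) : IntegrableOn (fun x => F x * r x) S ν :=
  hF.integrableOn.mul_bdd (by fun_prop : Continuous fun x => (r x : ℂ)).aestronglyMeasurable
    (ae_of_all _ fun x => by simpa using hC x)

theorem IsPositiveOn.im_setIntegral_mul_ofReal (hS : IsPositiveOn ν F S) (hF : Integrable F ν)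
    {r : X → ℝ} (hr : Continuous r) {C : ℝ} (hC : ∀ x, |r x| ≤ C) :
    (∫ x in S, F x * r x ∂ν).im = 0 := by
  have hshift := hS (fun x => C + r x) (by fun_prop)
    (fun x => show 0 ≤ C + r x by linarith [neg_abs_le (r x), hC x])
    ⟨C + C, forall_mem_range.mpr fun x => by linarith [le_abs_self (r x), hC x]⟩
  have hconst := hS.setIntegral_nonneg
  have hsplit : (fun x => F x * ((C + r x : ℝ) : ℂ)) = fun x => C * F x + F x * r x := by
    ext x; push_cast; ring
  rw [hsplit, integral_add (hF.integrableOn.const_mul _)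
      (integrableOn_mul_ofReal hF hr hC), integral_const_mul] at hshift
  have h1 := (Complex.le_def.mp hshift).2
  have h2 := (Complex.le_def.mp hconst).2
  simp only [zero_im, add_im, mul_im, ofReal_re, ofReal_im, zero_mul, add_zero] at h1 h2
  rw [← h2] at h1
  linarith

theorem IsPositiveOn.re_setIntegral_mul_ofReal_le (hS : IsPositiveOn ν F S)
    (hF : Integrable F ν) (hSm : MeasurableSet S) {r : X → ℝ} (hr : Continuous r) {C : ℝ}
    (hC : ∀ x, |r x| ≤ C) {c : ℝ} (hrc : ∀ x ∈ S, r x ≤ c) :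
    (∫ x in S, F x * r x ∂ν).re ≤ c * (∫ x in S, F x ∂ν).re := by
  have hbdd : ∀ x, max (c - r x) 0 ≤ |c| + C := fun x =>
    max_le (by linarith [le_abs_self c, neg_abs_le (r x), hC x])
      (by linarith [abs_nonneg c, abs_nonneg (r x), hC x])
  have hpos := hS (fun x => max (c - r x) 0) (by fun_prop) (fun x => le_max_right _ _)
    ⟨_, forall_mem_range.mpr hbdd⟩
  rw [setIntegral_congr_fun hSm (g := fun x => c * F x - F x * r x) fun x hx => by
      simp only [max_eq_left (sub_nonneg.mpr (hrc x hx)), ofReal_sub]; ring,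
    integral_sub (hF.integrableOn.const_mul _) (integrableOn_mul_ofReal hF hr hC),
    integral_const_mul] at hpos
  have := (Complex.le_def.mp hpos).1
  simp only [zero_re, sub_re, mul_re, ofReal_re, ofReal_im, zero_mul, sub_zero] at this
  linarith

theorem IsPositiveOn.norm_setIntegral_mul_le (hS : IsPositiveOn ν F S) (hF : Integrable F ν)
    (hSm : MeasurableSet S) {w : X → ℂ} (hw : Continuous w) {C : ℝ} (hC : ∀ x, ‖w x‖ ≤ C)
    {c : ℝ} (hwc : ∀ x ∈ S, ‖w x‖ ≤ c) :
    ‖∫ x in S, F x * w x ∂ν‖ ≤ c * (∫ x in S, F x ∂ν).re := by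
  set z := ∫ x in S, F x * w x ∂ν
  -- rotate `z` onto the positive real axis
  set u : ℂ := starRingEnd ℂ z / ‖z‖
  have hu : ‖u‖ ≤ 1 := by
    rw [norm_div, norm_conj, norm_real, norm_norm]
    exact div_self_le_one _
  have huz : u * z = ‖z‖ := by
    rcases eq_or_ne z 0 with hz | hz
    · simp [hz]
    · rw [div_mul_eq_mul_div, conj_mul', sq,
        mul_div_cancel_right₀ _ (ofReal_ne_zero.mpr (norm_ne_zero_iff.mpr hz))]
  have huwC : ∀ x, ‖u * w x‖ ≤ C := fun x => by
    rw [norm_mul]; exact (mul_le_of_le_one_left (norm_nonneg _) hu).trans (hC x)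
  have hre : ∀ x, |(u * w x).re| ≤ C := fun x => (abs_re_le_norm _).trans (huwC x)
  have him : ∀ x, |(u * w x).im| ≤ C := fun x => (abs_im_le_norm _).trans (huwC x)
  have hsplit : u * z = ∫ x in S, F x * (u * w x).re ∂ν + I * ∫ x in S, F x * (u * w x).im ∂ν := by
    rw [← integral_const_mul, ← integral_const_mul, ← integral_add
      (integrableOn_mul_ofReal hF (by fun_prop) hre)
      ((integrableOn_mul_ofReal hF (by fun_prop) him).const_mul I)]
    congr 1 with x
    conv_lhs => rw [mul_left_comm, ← re_add_im (u * w x)]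
    ring
  have him0 := hS.im_setIntegral_mul_ofReal hF (by fun_prop) him
  calc ‖z‖ = (u * z).re := by rw [huz, ofReal_re]
    _ = (∫ x in S, F x * (u * w x).re ∂ν).re := by
      rw [hsplit, add_re, I_mul_re, him0, neg_zero, add_zero]
    _ ≤ c * (∫ x in S, F x ∂ν).re :=
      hS.re_setIntegral_mul_ofReal_le hF hSm (by fun_prop) hre fun x hx =>
        (re_le_norm _).trans ((norm_mul_le_of_le hu (hwc x hx)).trans (one_mul c).le)

theorem IsPositiveOn.inter_disjointed {ι : Type*} [Preorder ι] [LocallyFiniteOrderBot ι]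
    (hS : IsPositiveOn ν F S) (hF : Integrable F ν) {φ : ι → X → ℝ}
    (hφ : ∀ i, Continuous (φ i)) (j : ι) :
    IsPositiveOn ν F (S ∩ disjointed (fun i => {x | 0 < φ i x}) j) :=
  disjointedRec (p := fun t => IsPositiveOn ν F (S ∩ t))
    (fun _ i ht => inter_sdiff_assoc S _ _ ▸ ht.diff_setOf_pos hF (hφ i))
    (hS.inter_setOf_pos hF (hφ j))

theorem norm_setIntegral_iUnion_sub_sum_le {ι : Type*} [Fintype ι] {P : ι → Set X}
    (hpos : ∀ j, IsPositiveOn ν F (P j)) (hF : Integrable F ν) (hPm : ∀ j, MeasurableSet (P j))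
    (hPd : Pairwise (Disjoint on P)) {w : X → ℂ} (hw : Continuous w) {C : ℝ}
    (hC : ∀ x, ‖w x‖ ≤ C) (a : ι → ℂ) {c : ℝ} (hwa : ∀ j, ∀ x ∈ P j, ‖w x - a j‖ ≤ c) :
    ‖∫ x in ⋃ j, P j, F x * w x ∂ν - ∑ j, (∫ x in P j, F x ∂ν) * a j‖
      ≤ c * (∫ x in ⋃ j, P j, F x ∂ν).re := by
  have hterm : ∀ j, ∫ x in P j, F x * w x ∂ν - (∫ x in P j, F x ∂ν) * a j
      = ∫ x in P j, F x * (w x - a j) ∂ν := fun j => by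
    rw [← integral_mul_const, ← integral_sub
      (hF.integrableOn.mul_bdd hw.aestronglyMeasurable (ae_of_all _ hC))
      (hF.integrableOn.mul_const _)]
    simp_rw [mul_sub]
  rw [integral_iUnion_fintype hPm hPd fun _ => hF.integrableOn.mul_bdd hw.aestronglyMeasurable
      (ae_of_all _ hC), integral_iUnion_fintype hPm hPd fun _ => hF.integrableOn,
    ← Finset.sum_sub_distrib, re_sum, Finset.mul_sum]
  simp_rw [hterm]
  exact (norm_sum_le _ _).trans <| Finset.sum_le_sum fun j _ =>
    (hpos j).norm_setIntegral_mul_le hF (hPm j) (w := (w · - a j)) (by fun_prop)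
      (fun x => (norm_sub_le _ _).trans (add_le_add_left (hC x) _)) (hwa j)

end IsPositiveOn

section Characters

variable [CommGroup G] [TopologicalSpace G]

@[fun_prop]
theorem continuous_coe_apply (g : G) : Continuous fun χ : PontryaginDual G => (χ g : ℂ) :=
  continuous_subtype_val.comp (continuous_eval_const g : Continuous fun χ : G →ₜ* Circle => χ g)

def trigPoly {n : ℕ} (c : Fin n → ℂ) (g : Fin n → G) (χ : PontryaginDual G) : ℂ :=
  ∑ j, c j * χ (g j)

@[fun_prop]
theorem continuous_trigPoly {n : ℕ} (c : Fin n → ℂ) (g : Fin n → G) :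
    Continuous (trigPoly c g) := by
  unfold trigPoly; fun_prop

theorem ofReal_norm_trigPoly_sq {n : ℕ} (c : Fin n → ℂ) (g : Fin n → G) (χ : PontryaginDual G) :
    ((‖trigPoly c g χ‖ ^ 2 : ℝ) : ℂ) = ∑ j, ∑ k, c j * starRingEnd ℂ (c k) * χ (g j / g k) := by
  rw [ofReal_pow, ← mul_conj', trigPoly, map_sum, Finset.sum_mul_sum]
  refine Finset.sum_congr rfl fun j _ => Finset.sum_congr rfl fun k _ => ?_
  rw [map_div, Circle.coe_div, map_mul, ← Circle.coe_inv_eq_conj, Circle.coe_inv]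
  ring

variable (Q : Set (PontryaginDual G))

def trigMonomialHom : G →* C(Q, ℂ) where
  toFun g := ⟨fun χ => ((χ : PontryaginDual G) g : ℂ),
    (continuous_coe_apply g).comp continuous_subtype_val⟩
  map_one' := by ext; simp
  map_mul' _ _ := by ext; simp

def trigSubalgebra : StarSubalgebra ℂ C(Q, ℂ) where
  toSubalgebra := Algebra.adjoin ℂ (range (trigMonomialHom Q))
  star_mem' := by
    change Algebra.adjoin ℂ _ ≤ star (Algebra.adjoin ℂ _)
    refine Algebra.adjoin_le ?_
    rintro - ⟨g, rfl⟩
    refine Algebra.subset_adjoin ⟨g⁻¹, ContinuousMap.ext fun χ => ?_⟩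
    change ((χ : PontryaginDual G) g⁻¹ : ℂ) = starRingEnd ℂ ((χ : PontryaginDual G) g)
    rw [map_inv, Circle.coe_inv_eq_conj]

theorem trigSubalgebra_toSubmodule :
    Subalgebra.toSubmodule (trigSubalgebra Q).toSubalgebra
      = Submodule.span ℂ (range (trigMonomialHom Q)) :=
  Algebra.adjoin_eq_span_of_subset ℂ <| by
    rw [← MonoidHom.coe_mrange, Submonoid.closure_eq]
    exact Submodule.subset_span

theorem trigSubalgebra_separatesPoints : (trigSubalgebra Q).SeparatesPoints := by
  intro χ ψ hne
  obtain ⟨g, hg⟩ := DFunLike.ne_iff.mp (Subtype.coe_injective.ne hne)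
  exact ⟨_, ⟨trigMonomialHom Q g, Algebra.subset_adjoin ⟨g, rfl⟩, rfl⟩,
    fun h => hg (Circle.coe_injective h)⟩

variable {Q}

theorem exists_trigPoly_near (hQ : IsCompact Q) {u : PontryaginDual G → ℂ} (hu : Continuous u)
    {η : ℝ} (hη : 0 < η) :
    ∃ (n : ℕ) (c : Fin n → ℂ) (g : Fin n → G), ∀ χ ∈ Q, ‖trigPoly c g χ - u χ‖ < η := by
  have := isCompact_iff_compactSpace.mp hQ
  let uQ : C(Q, ℂ) := ⟨fun χ => u χ, hu.comp continuous_subtype_val⟩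
  have hdense : uQ ∈ closure (trigSubalgebra Q : Set C(Q, ℂ)) := by
    rw [← StarSubalgebra.topologicalClosure_coe,
      ContinuousMap.starSubalgebra_topologicalClosure_eq_top_of_separatesPoints _
        (trigSubalgebra_separatesPoints Q)]
    trivial
  obtain ⟨p, hp, hpu⟩ := Metric.mem_closure_iff.mp hdense η hη
  have hp' : p ∈ Submodule.span ℂ (range (trigMonomialHom Q)) := trigSubalgebra_toSubmodule Q ▸ hp
  obtain ⟨n, c, e, rfl⟩ := Submodule.mem_span_set'.mp hp'
  choose g hg using fun j => (e j).2
  refine ⟨n, c, g, fun χ hχ => ?_⟩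
  calc ‖trigPoly c g χ - u χ‖ = dist ((∑ j, c j • (e j : C(Q, ℂ))) ⟨χ, hχ⟩) (uQ ⟨χ, hχ⟩) := by
        simp [dist_eq_norm, trigPoly, uQ, ← hg, trigMonomialHom]
    _ ≤ dist (∑ j, c j • (e j : C(Q, ℂ))) uQ := ContinuousMap.dist_apply_le_dist _
    _ < η := by rwa [dist_comm]

end Characters

section Bochner

variable [CommGroup G] [TopologicalSpace G] [MeasurableSpace (PontryaginDual G)]
  [BorelSpace (PontryaginDual G)] {ν : Measure (PontryaginDual G)} {F : PontryaginDual G → ℂ}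
  {f : G → ℂ}

theorem integral_mul_norm_trigPoly_sq (hF : Integrable F ν)
    (hinv : ∀ g, f g = ∫ χ, F χ * χ g ∂ν) {n : ℕ} (c : Fin n → ℂ) (g : Fin n → G) :
    ∫ χ, F χ * (‖trigPoly c g χ‖ ^ 2 : ℝ) ∂ν
      = ∑ j, ∑ k, c j * starRingEnd ℂ (c k) * f (g j / g k) := by
  have hint : ∀ j k, Integrable (fun χ => c j * starRingEnd ℂ (c k) * (F χ * χ (g j / g k))) ν :=
    fun j k => (hF.mul_bdd (continuous_coe_apply _).aestronglyMeasurable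
      (ae_of_all _ fun χ => (Circle.norm_coe _).le)).const_mul _
  symm
  calc ∑ j, ∑ k, c j * starRingEnd ℂ (c k) * f (g j / g k)
      = ∑ j, ∑ k, ∫ χ, c j * starRingEnd ℂ (c k) * (F χ * χ (g j / g k)) ∂ν := by
        simp_rw [hinv, integral_const_mul]
    _ = ∫ χ, ∑ j, ∑ k, c j * starRingEnd ℂ (c k) * (F χ * χ (g j / g k)) ∂ν := by
        rw [integral_finsetSum _ fun j _ => integrable_finsetSum _ fun k _ => hint j k]
        exact Finset.sum_congr rfl fun j _ => (integral_finsetSum _ fun k _ => hint j k).symm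
    _ = ∫ χ, F χ * (‖trigPoly c g χ‖ ^ 2 : ℝ) ∂ν := by
        congr 1 with χ
        simp_rw [ofReal_norm_trigPoly_sq, Finset.mul_sum]
        exact Finset.sum_congr rfl fun j _ => Finset.sum_congr rfl fun k _ => by ring

theorem IsPosDefFn.isPositiveOn (hf : IsPosDefFn f) (hinv : ∀ g, f g = ∫ χ, F χ * χ g ∂ν)
    (hF : Integrable F ν) {Q : Set (PontryaginDual G)} (hQ : IsCompact Q)
    (hFQ : ∀ χ ∉ Q, F χ = 0) : IsPositiveOn ν F Q := by
  rintro h hc h0 ⟨C, hC⟩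
  have hhC : ∀ χ, h χ ≤ C := fun χ => hC (mem_range_self χ)
  choose n c g hP using fun k : ℕ => exists_trigPoly_near hQ (u := fun χ => (√(h χ) : ℂ))
    (by fun_prop) (Nat.one_div_pos_of_nat (n := k))
  set P := fun k => trigPoly (c k) (g k)
  have hlim : ∀ χ ∈ Q, Tendsto (P · χ) atTop (𝓝 (√(h χ))) := fun χ hχ =>
    tendsto_iff_norm_sub_tendsto_zero.mpr <| squeeze_zero (fun _ => norm_nonneg _)
      (fun k => (hP k χ hχ).le) tendsto_one_div_add_atTop_nhds_zero_nat
  have hbound : ∀ k, ∀ χ ∈ Q, ‖P k χ‖ ≤ √C + 1 := fun k χ hχ => by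
    have h1 := norm_le_norm_add_norm_sub' (P k χ) (√(h χ) : ℂ)
    have h2 : 1 / ((k : ℝ) + 1) ≤ 1 := by
      rw [div_le_one (by positivity)]; linarith [k.cast_nonneg (α := ℝ)]
    rw [norm_real, Real.norm_of_nonneg (Real.sqrt_nonneg _)] at h1
    linarith [hP k χ hχ, Real.sqrt_le_sqrt (hhC χ)]
  have hconv : Tendsto (fun k => ∫ χ in Q, F χ * (‖P k χ‖ ^ 2 : ℝ) ∂ν) atTop
      (𝓝 (∫ χ in Q, F χ * h χ ∂ν)) := by
    refine tendsto_integral_of_dominated_convergence (fun χ => ‖F χ‖ * (√C + 1) ^ 2)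
      (fun k => (hF.aestronglyMeasurable.mul (by simp only [P]; fun_prop)).restrict)
      (hF.norm.mul_const _).restrict
      (fun k => ae_restrict_of_forall_mem hQ.measurableSet fun χ hχ => ?_)
      (ae_restrict_of_forall_mem hQ.measurableSet fun χ hχ => ?_)
    · rw [norm_mul, norm_real, Real.norm_of_nonneg (by positivity)]
      gcongr
      exact hbound k χ hχ
    · have := ((continuous_ofReal.tendsto _).comp ((hlim χ hχ).norm.pow 2)).const_mul (F χ)
      simpa [Real.sq_sqrt (h0 χ)] using this
  refine ge_of_tendsto' hconv fun k => ?_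
  rw [setIntegral_eq_integral_of_forall_compl_eq_zero fun χ hχ => by simp [hFQ χ hχ],
    integral_mul_norm_trigPoly_sq hF hinv]
  exact hf _ _ _

end Bochner

theorem IsCompact.elim_nhds_subcover_fin {X : Type*} [TopologicalSpace X] {s : Set X}
    (hs : IsCompact s) (U : X → Set X) (hU : ∀ x ∈ s, U x ∈ 𝓝 x) :
    ∃ (n : ℕ) (c : Fin n → X), (∀ j, c j ∈ s) ∧ s ⊆ ⋃ j, U (c j) := by
  obtain ⟨t, hts, hcover⟩ := hs.elim_nhds_subcover U hU
  refine ⟨t.card, fun j => t.equivFin.symm j, fun j => hts _ (t.equivFin.symm j).2,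
    fun x hx => ?_⟩
  obtain ⟨y, hy, hxy⟩ := mem_iUnion₂.mp (hcover hx)
  exact mem_iUnion.mpr ⟨t.equivFin ⟨y, hy⟩, by simpa using hxy⟩

theorem exists_fin_cozero_cover_close_on [CommGroup G] [TopologicalSpace G]
    {Q : Set (PontryaginDual G)} (hQ : IsCompact Q) {K : Set G} (hK : IsCompact K) {ε : ℝ}
    (hε : 0 < ε) :
    ∃ (n : ℕ) (χ : Fin n → PontryaginDual G) (φ : Fin n → PontryaginDual G → ℝ),
      (∀ j, χ j ∈ Q) ∧ (∀ j, Continuous (φ j)) ∧ Q ⊆ ⋃ j, {ξ | 0 < φ j ξ} ∧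
      ∀ j ξ, 0 < φ j ξ → ∀ g ∈ K, ‖(ξ g : ℂ) - χ j g‖ < ε := by
  have := isCompact_iff_compactSpace.mp hK
  let β : PontryaginDual G → C(K, Circle) := fun ξ =>
    (ContinuousMonoidHom.toContinuousMap ξ).restrict K
  have hβ : Continuous β := (ContinuousMap.continuous_restrict K).comp
    (ContinuousMonoidHom.isInducing_toContinuousMap G Circle).continuous
  obtain ⟨n, χ, hχQ, hcover⟩ := hQ.elim_nhds_subcover_fin (fun ξ₀ => {ξ | dist (β ξ) (β ξ₀) < ε})
    fun ξ₀ _ => (isOpen_lt (hβ.dist continuous_const) continuous_const).mem_nhds (by simpa using hε)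
  refine ⟨n, χ, fun j ξ => ε - dist (β ξ) (β (χ j)), hχQ, fun j => by fun_prop, ?_,
    fun j ξ hξ g hg => ?_⟩
  · simpa only [sub_pos] using hcover
  · calc ‖(ξ g : ℂ) - χ j g‖ = dist (β ξ ⟨g, hg⟩) (β (χ j) ⟨g, hg⟩) := (dist_eq_norm _ _).symm
      _ ≤ dist (β ξ) (β (χ j)) := ContinuousMap.dist_apply_le_dist _
      _ < ε := sub_pos.mp hξ

theorem measurableSet_disjointed {X ι : Type*} [MeasurableSpace X] [Preorder ι]
    [LocallyFiniteOrderBot ι] {f : ι → Set X} (hf : ∀ i, MeasurableSet (f i)) (j : ι) :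
    MeasurableSet (disjointed f j) :=
  disjointedRec (fun _ i ht => ht.diff (hf i)) (hf j)

theorem gclass_uniform_character_approximation_general
    [CommGroup G] [TopologicalSpace G]
    [MeasurableSpace G]
    (μ : Measure G)
    [MeasurableSpace (PontryaginDual G)] [BorelSpace (PontryaginDual G)]
    (ν : Measure (PontryaginDual G))
    -- `ν` is normalized so that Fourier inversion holds (Plancherel measure):
    (hinv : ∀ f : G → ℂ, Continuous f → IsPosDefFn f → Integrable f μ →
      ∀ g : G, f g = ∫ χ, fourierTr μ f χ * (χ g : ℂ) ∂ν)
    (W : Set G)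
    (Q : Set (PontryaginDual G)) (hQ : IsCompact Q)
    (K : Set G) (hK : IsCompact K) (ε : ℝ) (hε : 0 < ε) :
    ∃ (n : ℕ) (χ : Fin n → PontryaginDual G) (Qp : Fin n → Set (PontryaginDual G)),
      (∀ j, χ j ∈ Q) ∧
      (∀ j, MeasurableSet (Qp j)) ∧
      (∀ j, IsCompact (closure (Qp j))) ∧
      (∀ i j, i ≠ j → Disjoint (Qp i) (Qp j)) ∧
      (⋃ j, Qp j) = Q ∧
      ∀ f ∈ gclass μ W Q,
        (∀ j, 0 ≤ ∫ ξ in Qp j, fourierTr μ (fun g => (f g : ℂ)) ξ ∂ν) ∧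
        (∑ j, ∫ ξ in Qp j, fourierTr μ (fun g => (f g : ℂ)) ξ ∂ν) = (1 : ℂ) ∧
        ∀ g ∈ K,
          ‖(f g : ℂ) -
            ∑ j, (∫ ξ in Qp j, fourierTr μ (fun g' => (f g' : ℂ)) ξ ∂ν) * (χ j g : ℂ)‖ ≤ ε := by
  obtain ⟨n, χ, φ, hχQ, hφ, hQV, hclose⟩ := exists_fin_cozero_cover_close_on hQ hK hε
  set V := fun j => {ξ | 0 < φ j ξ}
  set P := fun j => Q ∩ disjointed V j
  have hPm : ∀ j, MeasurableSet (P j) := fun j => hQ.measurableSet.inter <|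
    measurableSet_disjointed (fun i => measurableSet_lt measurable_const (hφ i).measurable) j
  have hPd : Pairwise (Disjoint on P) := fun i j hij =>
    (disjoint_disjointed V hij).mono inter_subset_right inter_subset_right
  have hPQ : ⋃ j, P j = Q := by
    rw [← inter_iUnion, iUnion_disjointed, inter_eq_left.mpr hQV]
  refine ⟨n, χ, P, hχQ, hPm, fun j => hQ.closure_of_subset inter_subset_left,
    fun i j hij => hPd hij, hPQ, ?_⟩
  rintro f ⟨hfc, hpd, hfi, hf1, -, hsupp⟩
  set F := fourierTr μ fun g => (f g : ℂ)
  have hFQ : ∀ ξ ∉ Q, F ξ = 0 := fun ξ hξ => image_eq_zero_of_notMem_tsupport (mt (@hsupp ξ) hξ)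
  have hinvf := hinv _ (by fun_prop) hpd hfi.ofReal
  have hF1 : ∫ ξ, F ξ ∂ν = 1 := by simpa [hf1] using (hinvf 1).symm
  have hF : Integrable F ν := .of_integral_ne_zero (hF1 ▸ one_ne_zero)
  have hpos := (hpd.isPositiveOn hinvf hF hQ hFQ).inter_disjointed hF hφ
  have hQ1 : ∫ ξ in ⋃ j, P j, F ξ ∂ν = 1 := by
    rw [hPQ, setIntegral_eq_integral_of_forall_compl_eq_zero hFQ, hF1]
  refine ⟨fun j => (hpos j).setIntegral_nonneg, by
    rw [← integral_iUnion_fintype hPm hPd fun _ => hF.integrableOn, hQ1], fun g hg => ?_⟩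
  have := norm_setIntegral_iUnion_sub_sum_le hpos hF hPm hPd (continuous_coe_apply g)
    (fun ξ => (Circle.norm_coe _).le) (fun j => (χ j g : ℂ))
    fun j ξ hξ => (hclose j ξ (disjointed_subset V j hξ.2) g hg).le
  rwa [hQ1, one_re, mul_one, hPQ, setIntegral_eq_integral_of_forall_compl_eq_zero
    fun ξ hξ => mul_eq_zero_of_left (hFQ ξ hξ) _, ← hinvf g] at this

/-- finite approximation of functions in `𝒢(W,Q)_G` by nonnegative convex
combinations of characters from `Q`, uniformly on a compact set `K`, up to `ε`. -/
theorem gclass_uniform_character_approximation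
    [CommGroup G] [TopologicalSpace G] [IsTopologicalGroup G]
    [LocallyCompactSpace G] [T2Space G] [MeasurableSpace G] [BorelSpace G]
    (μ : Measure G) [μ.IsHaarMeasure]
    [MeasurableSpace (PontryaginDual G)] [BorelSpace (PontryaginDual G)]
    (ν : Measure (PontryaginDual G)) [ν.IsHaarMeasure]
    -- `ν` is normalized so that Fourier inversion holds (Plancherel measure):
    (hinv : ∀ f : G → ℂ, Continuous f → IsPosDefFn f → Integrable f μ →
      ∀ g : G, f g = ∫ χ, fourierTr μ f χ * (χ g : ℂ) ∂ν)
    (W : Set G) (hWclosed : IsClosed W) (hWfin : μ W < ⊤)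
    (Q : Set (PontryaginDual G)) (hQ : IsCompact Q)
    (K : Set G) (hK : IsCompact K) (ε : ℝ) (hε : 0 < ε) :
    ∃ (n : ℕ) (χ : Fin n → PontryaginDual G) (Qp : Fin n → Set (PontryaginDual G)),
      (∀ j, χ j ∈ Q) ∧
      (∀ j, MeasurableSet (Qp j)) ∧
      (∀ j, IsCompact (closure (Qp j))) ∧
      (∀ i j, i ≠ j → Disjoint (Qp i) (Qp j)) ∧
      (⋃ j, Qp j) = Q ∧
      ∀ f ∈ gclass μ W Q,
        (∀ j, 0 ≤ ∫ ξ in Qp j, fourierTr μ (fun g => (f g : ℂ)) ξ ∂ν) ∧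
        (∑ j, ∫ ξ in Qp j, fourierTr μ (fun g => (f g : ℂ)) ξ ∂ν) = (1 : ℂ) ∧
        ∀ g ∈ K,
          ‖(f g : ℂ) -
            ∑ j, (∫ ξ in Qp j, fourierTr μ (fun g' => (f g' : ℂ)) ξ ∂ν) * (χ j g : ℂ)‖ ≤ ε :=
  gclass_uniform_character_approximation_general μ ν hinv W Q hQ K hK ε hε
end
end

section
/- Let G be a locally compact abelian Hausdorff topological group and H ≤ G an open (hence closed) subgroup of G. If f : H → ℂ is continuous and positive definite on H, then its trivial extension f̃ : G → ℂ, defined by f̃(g) = f(g) for g ∈ H and f̃(g) = 0 otherwise, is continuous and positive definite on G. -/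
/-!
Sort the points `g j` by their cosets of `H`. The quadratic form of the trivial extension
only couples points in the same coset, so it is a sum of blocks, and on the coset of `r` the
block is the quadratic form of `f` at the points `g j / r ∈ H`. Continuity holds because an
open subgroup is also closed.
-/

open MeasureTheory Filter Topology Complex Classical
open scoped ComplexOrder

noncomputable section

variable {G : Type*}

theorem IsPosDefFn.sum_nonneg [CommGroup G] {f : G → ℂ} (hf : IsPosDefFn f)
    {ι : Type*} [Fintype ι] (c : ι → ℂ) (g : ι → G) :
    0 ≤ ∑ j, ∑ k, c j * (starRingEnd ℂ) (c k) * f (g j / g k) := by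
  let e := (Fintype.equivFin ι).symm
  calc 0 ≤ ∑ j, ∑ k, c (e j) * (starRingEnd ℂ) (c (e k)) * f (g (e j) / g (e k)) :=
        hf _ (c ∘ e) (g ∘ e)
    _ = _ := by
        rw [← e.sum_comp]
        exact Finset.sum_congr rfl fun j _ =>
          e.sum_comp fun k => c (e j) * (starRingEnd ℂ) (c k) * f (g (e j) / g k)

theorem IsPosDefFn.finset_sum_nonneg [CommGroup G] {f : G → ℂ} (hf : IsPosDefFn f)
    {ι : Type*} (s : Finset ι) (c : ι → ℂ) (g : ι → G) :
    0 ≤ ∑ j ∈ s, ∑ k ∈ s, c j * (starRingEnd ℂ) (c k) * f (g j / g k) := by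
  simpa only [← Finset.sum_coe_sort s] using hf.sum_nonneg (fun j : s => c j) (fun j : s => g j)

theorem Finset.sum_sum_ite_eq_sum_fiberwise {ι κ M : Type*} [DecidableEq κ] [AddCommMonoid M]
    (s : Finset ι) (p : ι → κ) (a : ι → ι → M) :
    ∑ j ∈ s, ∑ k ∈ s, (if p j = p k then a j k else 0) =
      ∑ q ∈ s.image p, ∑ j ∈ s with p j = q, ∑ k ∈ s with p k = q, a j k := by
  rw [← Finset.sum_fiberwise_of_maps_to fun j hj => Finset.mem_image_of_mem p hj]
  refine Finset.sum_congr rfl fun q _ => Finset.sum_congr rfl fun j hj => ?_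
  simp only [Finset.sum_filter, (Finset.mem_filter.1 hj).2, eq_comm]

theorem continuous_dite_of_isClopen {X Y : Type*} [TopologicalSpace X] [TopologicalSpace Y]
    {s : Set X} (hs : IsClopen s) {f : s → Y} (hf : Continuous f) (y : Y) :
    Continuous fun x => if hx : x ∈ s then f ⟨x, hx⟩ else y := by
  refine continuous_iff_continuousAt.2 fun x => ?_
  by_cases hx : x ∈ s
  · refine (continuousOn_iff_continuous_domRestrict.2 ?_).continuousAt (hs.isOpen.mem_nhds hx)
    convert hf using 1
    exact funext fun z => dif_pos z.2
  · exact (continuousOn_const (c := y) (s := sᶜ)).congr (fun z hz => dif_neg hz)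
      |>.continuousAt (hs.compl.isOpen.mem_nhds hx)

theorem IsPosDefFn.dite_mem_subgroup [CommGroup G] {H : Subgroup G} {f : H → ℂ}
    (hf : IsPosDefFn f) : IsPosDefFn fun g : G => if hg : g ∈ H then f ⟨g, hg⟩ else 0 := by
  intro n c g
  let q : Fin n → G ⧸ H := fun j => g j
  have hq : ∀ j, g j / (q j).out ∈ H := fun j =>
    QuotientGroup.eq_iff_div_mem.1 (QuotientGroup.out_eq' (q j)).symm
  let h : Fin n → H := fun j => ⟨g j / (q j).out, hq j⟩
  have key : ∀ j k, (if hg : g j / g k ∈ H then f ⟨_, hg⟩ else 0) =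
      if q j = q k then f (h j / h k) else 0 := by
    intro j k
    by_cases hjk : q j = q k
    · have hmem : g j / g k ∈ H := QuotientGroup.eq_iff_div_mem.1 hjk
      rw [dif_pos hmem, if_pos hjk]
      congr 1
      ext
      simp only [h, Subgroup.coe_div, hjk, div_div_div_cancel_right]
    · rw [dif_neg (mt QuotientGroup.eq_iff_div_mem.2 hjk), if_neg hjk]
  simp only [key, mul_ite, mul_zero]
  rw [Finset.sum_sum_ite_eq_sum_fiberwise]
  exact Finset.sum_nonneg fun _ _ => hf.finset_sum_nonneg _ c h

theorem posdef_trivial_extension_general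
    [CommGroup G] [TopologicalSpace G] [IsTopologicalGroup G]
    (H : Subgroup G) (hHopen : IsOpen (H : Set G))
    (f : H → ℂ) (hfc : Continuous f) (hfpd : IsPosDefFn f) :
    Continuous (fun g : G => if hg : g ∈ H then f ⟨g, hg⟩ else 0) ∧
    IsPosDefFn (fun g : G => if hg : g ∈ H then f ⟨g, hg⟩ else 0) := by
  have hH : IsClopen (H : Set G) := ⟨Subgroup.isClosed_of_isOpen H hHopen, hHopen⟩
  exact ⟨continuous_dite_of_isClopen hH hfc 0, hfpd.dite_mem_subgroup⟩

/-- the trivial extension of a continuous positive definite function on an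
open subgroup is continuous and positive definite on the whole group. -/
theorem posdef_trivial_extension
    [CommGroup G] [TopologicalSpace G] [IsTopologicalGroup G]
    [LocallyCompactSpace G] [T2Space G]
    (H : Subgroup G) (hHopen : IsOpen (H : Set G))
    (f : H → ℂ) (hfc : Continuous f) (hfpd : IsPosDefFn f) :
    Continuous (fun g : G => if hg : g ∈ H then f ⟨g, hg⟩ else 0) ∧
    IsPosDefFn (fun g : G => if hg : g ∈ H then f ⟨g, hg⟩ else 0) :=
  posdef_trivial_extension_general H hHopen f hfc hfpd

end
end

section
/- Let G be a locally compact abelian Hausdorff topological group, G₀ ≤ G an open subgroup, and Q ⊆ Ĝ a compact subset of the dual group. Then the set Q* := { γ ∈ Ĝ₀ : every character χ ∈ Ĝ with χ|_{G₀} = γ lies in Q } is a compact subset of Ĝ₀. (In particular, Q* is a closed subset of the compact set Q₀ := { χ|_{G₀} : χ ∈ Q }, since the restriction map Φ : Ĝ → Ĝ₀, χ ↦ χ|_{G₀}, is continuous and open.) -/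
open MeasureTheory Filter Topology Complex
open scoped ComplexOrder

noncomputable section

variable {G : Type*}

/-!
Every character of the open subgroup `G₀` extends to `G`: algebraically because `𝕋` is divisible,
hence an injective `ℤ`-module, and continuously because the extension is continuous on the open
subgroup `G₀`. So the restriction `Φ : Ĝ → Ĝ₀` is surjective and `Q* = Φ (Φ⁻¹ Q*)`. Finally
`Φ⁻¹ Q* = ⋂_{κ ∈ ker Φ} Q κ⁻¹` is a closed subset of `Q`, hence compact, and so is its image.
-/

noncomputable instance : DivisibleBy (Additive Circle) ℤ :=
  Function.Surjective.divisibleBy (fun x : ℝ => Additive.ofMul (Circle.exp x))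
    (Additive.ofMul.surjective.comp Circle.exp_surjective)
    fun x n => congrArg Additive.ofMul (Circle.exp_zsmul x n)

theorem Subgroup.exists_monoidHom_circle_extension [CommGroup G] (H : Subgroup G)
    (f : H →* Circle) : ∃ F : G →* Circle, F.comp H.subtype = f := by
  obtain ⟨F, hF⟩ := (Module.Baer.of_divisible (Additive Circle)).extension_property_addMonoidHom
    H.subtype.toAdditive H.subtype_injective f.toAdditive
  exact ⟨MonoidHom.toAdditive.symm F, congrArg MonoidHom.toAdditive.symm hF⟩

theorem MonoidHom.continuous_of_continuous_comp_subtype {M : Type*} [Group G]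
    [TopologicalSpace G] [IsTopologicalGroup G] [Monoid M] [TopologicalSpace M] [ContinuousMul M]
    {H : Subgroup G} (hH : IsOpen (H : Set G)) (f : G →* M)
    (hf : Continuous (f.comp H.subtype)) : Continuous f := by
  refine continuous_of_continuousAt_one f ?_
  have hfH : ContinuousOn f H := continuousOn_iff_continuous_domRestrict.mpr hf
  exact hfH.continuousAt (hH.mem_nhds H.one_mem)

theorem PontryaginDual.map_subtype_surjective [CommGroup G] [TopologicalSpace G]
    [IsTopologicalGroup G] {H : Subgroup G} (hH : IsOpen (H : Set G)) :
    Function.Surjective (PontryaginDual.map ⟨H.subtype, continuous_subtype_val⟩) := by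
  intro γ
  obtain ⟨F, hF⟩ := H.exists_monoidHom_circle_extension γ.toMonoidHom
  have hFcont : Continuous F :=
    F.continuous_of_continuous_comp_subtype hH (hF ▸ map_continuous γ)
  exact ⟨⟨F, hFcont⟩, PontryaginDual.ext fun g => DFunLike.congr_fun hF g⟩

section kernImage

variable {A B : Type*} [Group A] [Monoid B] (f : A →* B) {Q : Set A}

theorem MonoidHom.preimage_kernImage_eq_biInter_ker :
    f ⁻¹' Set.kernImage f Q = ⋂ k ∈ f.ker, (· * k) ⁻¹' Q := by
  ext a
  simp only [Set.mem_preimage, Set.kernImage, Set.mem_ofPred_eq, Set.mem_iInter,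
    MonoidHom.mem_ker]
  refine ⟨fun h k hk => h (by rw [map_mul, hk, mul_one]), fun h a' ha' => ?_⟩
  simpa using h (a⁻¹ * a') (by rw [map_mul, ha', ← map_mul, inv_mul_cancel, map_one])

variable [TopologicalSpace A] [ContinuousMul A]

theorem MonoidHom.isClosed_preimage_kernImage (hQ : IsClosed Q) :
    IsClosed (f ⁻¹' Set.kernImage f Q) := by
  rw [f.preimage_kernImage_eq_biInter_ker]
  exact isClosed_biInter fun k _ => hQ.preimage (continuous_mul_const k)

theorem IsCompact.kernImage_of_surjective [T2Space A] [TopologicalSpace B]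
    (hf : Continuous f) (hsurj : Function.Surjective f) (hQ : IsCompact Q) :
    IsCompact (Set.kernImage f Q) := by
  rw [← Set.image_preimage_eq (Set.kernImage f Q) hsurj]
  refine (hQ.of_isClosed_subset (f.isClosed_preimage_kernImage hQ.isClosed) ?_).image hf
  exact fun a ha => ha rfl

end kernImage

theorem qstar_isCompact_general
    [CommGroup G] [TopologicalSpace G] [IsTopologicalGroup G]
    (G₀ : Subgroup G) (hG₀open : IsOpen (G₀ : Set G))
    (Q : Set (PontryaginDual G)) (hQ : IsCompact Q) :
    IsCompact {γ : PontryaginDual G₀ |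
      ∀ χ : PontryaginDual G, (∀ g : G₀, χ (g : G) = γ g) → χ ∈ Q} := by
  set Φ := PontryaginDual.map ⟨G₀.subtype, continuous_subtype_val⟩
  have hQstar : {γ : PontryaginDual G₀ |
      ∀ χ : PontryaginDual G, (∀ g : G₀, χ (g : G) = γ g) → χ ∈ Q} = Set.kernImage Φ Q := by
    ext γ
    exact forall_congr' fun χ => imp_congr_left (PontryaginDual.ext_iff (ψ := Φ χ) (φ := γ)).symm
  rw [hQstar]
  exact hQ.kernImage_of_surjective (Φ : PontryaginDual G →* PontryaginDual G₀) (map_continuous Φ)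
    (PontryaginDual.map_subtype_surjective hG₀open)

/-- for an open subgroup `G₀ ≤ G` and a compact `Q ⊆ Ĝ`, the set
`Q* = {γ ∈ Ĝ₀ : every extension of γ to G lies in Q}` is compact in `Ĝ₀`. -/
theorem qstar_isCompact
    [CommGroup G] [TopologicalSpace G] [IsTopologicalGroup G]
    [LocallyCompactSpace G] [T2Space G]
    (G₀ : Subgroup G) (hG₀open : IsOpen (G₀ : Set G))
    (Q : Set (PontryaginDual G)) (hQ : IsCompact Q) :
    IsCompact {γ : PontryaginDual G₀ |
      ∀ χ : PontryaginDual G, (∀ g : G₀, χ (g : G) = γ g) → χ ∈ Q} :=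
  qstar_isCompact_general G₀ hG₀open Q hQ

end
end

section
/- Let G be a locally compact abelian Hausdorff topological group, W ⊆ G closed with positive, finite Haar measure, Q ⊆ Ĝ compact, G₀ ≤ G an open subgroup containing W with Haar measure λ_{G₀} = λ_G|_{G₀}, and Q* := { γ ∈ Ĝ₀ : every χ ∈ Ĝ with χ|_{G₀} = γ lies in Q }. Then for a function h⁰ : G₀ → ℂ with trivial extension h : G → ℂ (h = h⁰ on G₀ and h = 0 off G₀), one has h⁰ ∈ 𝒢(W,Q*)_{G₀} if and only if h ∈ 𝒢(W,Q)_G. -/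
/-!
Write `res : Ĝ → Ĝ₀` for restriction of characters. Every condition defining the Gorbachev class
except the one on the Fourier support passes directly between `h⁰` and its trivial extension `h`;
for positive definiteness one splits the quadratic form of `h` into blocks, one for each coset of
`G₀` met by the points, and each block is a quadratic form of `h⁰`. Moreover `ĥ = ĥ⁰ ∘ res`. The
map `res` is surjective, since characters extend from the open subgroup (the circle group is
divisible, hence an injective `ℤ`-module), and proper, since by Arzelà–Ascoli the preimage of a
compact set of characters of `G₀` is an equicontinuous, pointwise closed family on `G`. A closed
surjective homomorphism of topological groups is open, so `tsupport ĥ = res⁻¹ (tsupport ĥ⁰)`,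
and this set lies in `Q` exactly when `tsupport ĥ⁰ ⊆ Q*`.
-/

open MeasureTheory Filter Topology Complex Classical
open scoped ComplexOrder

noncomputable section

variable {G : Type*}

section ExtensionByZero

variable {X M : Type*} [TopologicalSpace X] [Zero M] {s : Set X} {f : X → M}

theorem IsClopen.continuous_domRestrict_iff [TopologicalSpace M] (hs : IsClopen s)
    (hf : ∀ x ∉ s, f x = 0) : Continuous (s.domRestrict f) ↔ Continuous f := by
  refine ⟨fun hcont => continuous_iff_continuousAt.mpr fun x => ?_, fun hcont => hcont.comp
    continuous_subtype_val⟩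
  by_cases hx : x ∈ s
  · exact (continuousOn_iff_continuous_domRestrict.mpr hcont).continuousAt (hs.isOpen.mem_nhds hx)
  · exact (continuousAt_const (y := (0 : M))).congr
      (Filter.eventuallyEq_of_mem (hs.isClosed.isOpen_compl.mem_nhds hx) fun y hy => (hf y hy).symm)

theorem IsClosed.tsupport_eq_image_tsupport_domRestrict (hs : IsClosed s)
    (hf : ∀ x ∉ s, f x = 0) : tsupport f = (↑) '' tsupport (s.domRestrict f) := by
  have hsub : Function.support f ⊆ s := fun x hx => by_contra fun hxs => hx (hf x hxs)
  have hsupp : Function.support f = (↑) '' Function.support (s.domRestrict f) := by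
    rw [Set.domRestrict_eq, Function.support_comp_eq_preimage, Subtype.image_preimage_coe,
      Set.inter_eq_right.mpr hsub]
  rw [tsupport, tsupport, hsupp, hs.isClosedEmbedding_subtypeVal.closure_image_eq]

end ExtensionByZero

theorem IsOpenMap.tsupport_comp_eq_preimage {X Y M : Type*} [TopologicalSpace X]
    [TopologicalSpace Y] [Zero M] {p : X → Y} (hp : IsOpenMap p) (hcont : Continuous p)
    (F : Y → M) : tsupport (F ∘ p) = p ⁻¹' tsupport F := by
  rw [tsupport, Function.support_comp_eq_preimage, ← hp.preimage_closure_eq_closure_preimage hcont,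
    tsupport]

theorem integrable_comap_subtypeVal_iff {X E : Type*} [MeasurableSpace X] [NormedAddCommGroup E]
    {μ : Measure X} {s : Set X} (hs : MeasurableSet s) {f : X → E} (hf : ∀ x ∉ s, f x = 0) :
    Integrable (s.domRestrict f) (μ.comap (↑)) ↔ Integrable f μ := by
  rw [Set.domRestrict_eq, ← integrableOn_iff_comap_subtypeVal hs]
  exact integrableOn_iff_integrable_of_support_subset fun x hx => by_contra fun hxs => hx (hf x hxs)

section PositiveDefinite

variable [CommGroup G] {G₀ : Subgroup G} {f : G → ℂ}

theorem IsPosDefFn.restrict (hf : IsPosDefFn f) (G₀ : Subgroup G) :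
    IsPosDefFn fun x : G₀ => f x :=
  fun n c g => hf n c fun j => g j

theorem IsPosDefFn.sum_nonneg_of_mem_coset (hf : IsPosDefFn fun x : G₀ => f x) (r : G) {n : ℕ}
    (c : Fin n → ℂ) (g : Fin n → G) (hc : ∀ j, c j ≠ 0 → r⁻¹ * g j ∈ G₀) :
    0 ≤ ∑ j, ∑ k, c j * (starRingEnd ℂ) (c k) * f (g j / g k) := by
  let s : Fin n → G₀ := fun j => if hj : r⁻¹ * g j ∈ G₀ then ⟨_, hj⟩ else 1
  refine (hf n c s).trans_eq (Finset.sum_congr rfl fun j _ => Finset.sum_congr rfl fun k _ => ?_)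
  by_cases hj : c j = 0
  · simp [hj]
  by_cases hk : c k = 0
  · simp [hk]
  have hs : ((s j / s k : G₀) : G) = g j / g k := by
    simp [s, dif_pos (hc j hj), dif_pos (hc k hk)]
  rw [← hs]

theorem IsPosDefFn.of_restrict (hf₀ : ∀ g ∉ G₀, f g = 0) (hf : IsPosDefFn fun x : G₀ => f x) :
    IsPosDefFn f := by
  intro n c g
  let q : Fin n → G ⧸ G₀ := fun j => g j
  let c' : G ⧸ G₀ → Fin n → ℂ := fun t j => if q j = t then c j else 0
  have hblock (t : G ⧸ G₀) : 0 ≤ ∑ j, ∑ k, c' t j * (starRingEnd ℂ) (c' t k) * f (g j / g k) := by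
    refine hf.sum_nonneg_of_mem_coset t.out (c' t) g fun j hj => ?_
    have hqj : q j = t := by_contra fun h => hj (if_neg h)
    rw [← QuotientGroup.eq, QuotientGroup.out_eq', ← hqj]
  have hsplit : ∑ t ∈ Finset.univ.image q, ∑ j, ∑ k, c' t j * (starRingEnd ℂ) (c' t k) *
      f (g j / g k) = ∑ j, ∑ k, c j * (starRingEnd ℂ) (c k) * f (g j / g k) := by
    rw [Finset.sum_comm]
    refine Finset.sum_congr rfl fun j _ => ?_
    rw [Finset.sum_comm]
    refine Finset.sum_congr rfl fun k _ => ?_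
    rw [Finset.sum_eq_single_of_mem (q j) (Finset.mem_image_of_mem q (Finset.mem_univ j))
      fun t _ ht => by simp [c', Ne.symm ht]]
    by_cases hqk : q k = q j
    · simp [c', hqk]
    · have : g j / g k ∉ G₀ := by rwa [div_eq_inv_mul, ← QuotientGroup.eq]
      simp [hf₀ _ this]
  exact hsplit ▸ Finset.sum_nonneg fun t _ => hblock t

theorem isPosDefFn_restrict_iff (hf₀ : ∀ g ∉ G₀, f g = 0) :
    IsPosDefFn (fun x : G₀ => f x) ↔ IsPosDefFn f :=
  ⟨IsPosDefFn.of_restrict hf₀, fun hf => hf.restrict G₀⟩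

end PositiveDefinite

theorem MonoidHom.continuous_of_continuous_restrict_of_isOpen [Group G] [TopologicalSpace G]
    [IsTopologicalGroup G] {M : Type*} [MulOneClass M] [TopologicalSpace M] [ContinuousMul M]
    (φ : G →* M) {G₀ : Subgroup G} (hG₀ : IsOpen (G₀ : Set G)) (hφ : Continuous fun x : G₀ => φ x) :
    Continuous φ :=
  continuous_of_continuousAt_one φ <|
    (continuousOn_iff_continuous_domRestrict.mpr hφ).continuousAt (hG₀.mem_nhds G₀.one_mem)

theorem IsCompact.equicontinuousAt_one {X Y F : Type*} [TopologicalSpace X] [One X]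
    [UniformSpace Y] [One Y] [TopologicalSpace F] [FunLike F X Y] [OneHomClass F X Y]
    [ContinuousEval F X Y] {K : Set F} (hK : IsCompact K) :
    EquicontinuousAt (fun φ : K => ⇑(φ : F)) 1 := by
  intro U hU
  have hev (φ : F) (_ : φ ∈ K) : ∀ᶠ p : X × F in 𝓝 (1, φ), ((1 : Y), p.2 p.1) ∈ U := by
    have hcont : Continuous fun p : X × F => p.2 p.1 := continuous_eval.comp continuous_swap
    refine hcont.continuousAt.preimage_mem_nhds (x := (1, φ)) (t := {y | ((1 : Y), y) ∈ U}) ?_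
    simp only [map_one]
    exact UniformSpace.ball_mem_nhds (1 : Y) hU
  filter_upwards [hK.eventually_forall_of_forall_eventually
    (P := fun x φ => ((1 : Y), φ x) ∈ U) hev] with x hx φ
  simpa only [map_one] using hx φ φ.2

theorem ContinuousMonoidHom.isCompact_of_equicontinuous {X Y : Type*} [TopologicalSpace X]
    [Monoid X] [UniformSpace Y] [Monoid Y] [CompactSpace Y] {S : Set (X →ₜ* Y)}
    (hS : IsClosed ((⇑) '' S)) (hSeq : Equicontinuous fun φ : S => ⇑(φ : X →ₜ* Y)) :
    IsCompact S := by
  have himage : ContinuousMap.toFun '' (toContinuousMap '' S) = (⇑) '' S := Set.image_image ..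
  rw [(isInducing_toContinuousMap X Y).isCompact_iff]
  refine ArzelaAscoli.isCompact_of_equicontinuous _ (himage ▸ hS.isCompact) ?_
  rw [equicontinuous_iff_range, ← Set.image_eq_range] at hSeq ⊢
  rwa [Set.image_image]

noncomputable instance Circle.instDivisibleByAdditiveInt : DivisibleBy (Additive Circle) ℤ :=
  Function.Surjective.divisibleBy Circle.expHom
    (fun z => (Circle.exp_surjective z.toMul).imp fun _ h => congrArg Additive.ofMul h)
    fun a n => map_zsmul Circle.expHom n a

namespace PontryaginDual

section Restriction

variable [CommGroup G] [TopologicalSpace G] {G₀ : Subgroup G}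

variable (G₀) in
def restrict : PontryaginDual G →ₜ* PontryaginDual G₀ :=
  map ⟨G₀.subtype, continuous_subtype_val⟩

theorem restrict_surjective [IsTopologicalGroup G] (hG₀ : IsOpen (G₀ : Set G)) :
    Function.Surjective (restrict G₀) := by
  intro γ
  obtain ⟨φ, hφ⟩ := (Module.Baer.of_divisible (Additive Circle)).extension_property_addMonoidHom
    G₀.subtype.toAdditive (fun _ _ h => Subtype.ext h) γ.toMonoidHom.toAdditive
  let χ : G →* Circle := MonoidHom.toAdditive.symm φ
  have hχ (x : G₀) : χ x = γ x := congrArg Additive.toMul (DFunLike.congr_fun hφ x)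
  have hcont : Continuous χ :=
    χ.continuous_of_continuous_restrict_of_isOpen hG₀ (by rw [funext hχ]; exact map_continuous γ)
  exact ⟨⟨χ, hcont⟩, ext hχ⟩

theorem isClosed_image_coe_preimage_restrict [IsTopologicalGroup G] (hG₀ : IsOpen (G₀ : Set G))
    {K : Set (PontryaginDual G₀)} (hK : IsCompact K) :
    IsClosed ((⇑) '' (restrict G₀ ⁻¹' K) : Set (G → Circle)) := by
  have himage : (⇑) '' (restrict G₀ ⁻¹' K) =
      Set.range ((⇑) : (G →* Circle) → G → Circle) ∩
        (fun φ (x : G₀) => φ x) ⁻¹' ((⇑) '' K) := by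
    ext φ
    constructor
    · rintro ⟨χ, hχ, rfl⟩
      exact ⟨⟨(χ : G →* Circle), rfl⟩, restrict G₀ χ, hχ, rfl⟩
    · rintro ⟨⟨φ, rfl⟩, γ, hγ, hγφ⟩
      have hφγ : (fun x : G₀ => φ x) = γ := hγφ.symm
      have hcont : Continuous φ :=
        φ.continuous_of_continuous_restrict_of_isOpen hG₀ (by rw [hφγ]; exact map_continuous γ)
      let χ : PontryaginDual G := ⟨φ, hcont⟩
      have hres : restrict G₀ χ = γ := ext (congrFun hφγ)
      exact ⟨χ, show restrict G₀ χ ∈ K from hres ▸ hγ, rfl⟩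
  have hKcoe : IsClosed ((⇑) '' K : Set (G₀ → Circle)) :=
    (hK.image (continuous_pi fun x =>
      (continuous_eval_const x : Continuous fun γ : G₀ →ₜ* Circle => γ x))).isClosed
  rw [himage]
  exact (MonoidHom.isClosed_range_coe G Circle).inter
    (hKcoe.preimage (continuous_pi fun x : G₀ => continuous_apply (x : G)))

theorem equicontinuousAt_one_preimage_restrict [IsTopologicalGroup G] [LocallyCompactSpace G]
    (hG₀ : IsOpen (G₀ : Set G)) {K : Set (PontryaginDual G₀)} (hK : IsCompact K) :
    EquicontinuousAt (fun χ : restrict G₀ ⁻¹' K => ⇑(χ : PontryaginDual G)) 1 := by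
  have : LocallyCompactSpace G₀ := hG₀.locallyCompactSpace
  have : ContinuousEval (PontryaginDual G₀) G₀ Circle :=
    inferInstanceAs (ContinuousEval (G₀ →ₜ* Circle) G₀ Circle)
  intro U hU
  have hK₀ := hK.equicontinuousAt_one U hU
  have hmap : Filter.map (↑) (𝓝 (1 : G₀)) = 𝓝 (1 : G) :=
    hG₀.isOpenEmbedding_subtypeVal.map_nhds_eq 1
  rw [← hmap, Filter.eventually_map]
  filter_upwards [hK₀] with x hx χ
  exact hx ⟨restrict G₀ χ, χ.2⟩

theorem isClosedMap_restrict [IsTopologicalGroup G] [LocallyCompactSpace G]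
    (hG₀ : IsOpen (G₀ : Set G)) : IsClosedMap (restrict G₀) := by
  have : LocallyCompactSpace G₀ := hG₀.locallyCompactSpace
  refine (isProperMap_iff_isCompact_preimage.mpr
    ⟨(restrict G₀).continuous, fun K hK => ?_⟩).isClosedMap
  exact ContinuousMonoidHom.isCompact_of_equicontinuous
    (isClosed_image_coe_preimage_restrict hG₀ hK)
    (equicontinuous_of_equicontinuousAt_one _ (equicontinuousAt_one_preimage_restrict hG₀ hK))

theorem isOpenQuotientMap_restrict [IsTopologicalGroup G] [LocallyCompactSpace G]
    (hG₀ : IsOpen (G₀ : Set G)) : IsOpenQuotientMap (restrict G₀) :=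
  MonoidHom.isOpenQuotientMap_of_isQuotientMap <| (isClosedMap_restrict hG₀).isQuotientMap
    (restrict G₀).continuous (restrict_surjective hG₀)

theorem subset_setOf_extensions_mem_iff {A : Set (PontryaginDual G₀)}
    {Q : Set (PontryaginDual G)} :
    A ⊆ {γ | ∀ χ : PontryaginDual G, (∀ g : G₀, χ g = γ g) → χ ∈ Q} ↔ restrict G₀ ⁻¹' A ⊆ Q :=
  ⟨fun hA χ hχ => hA hχ χ fun _ => rfl,
    fun hA γ hγ χ hχ => hA (show restrict G₀ χ ∈ A from (ext hχ : restrict G₀ χ = γ) ▸ hγ)⟩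

theorem fourierTr_comp_restrict [MeasurableSpace G] (μ : Measure G)
    (hG₀ : MeasurableSet (G₀ : Set G)) {f : G → ℂ} (hf : ∀ g ∉ G₀, f g = 0) :
    fourierTr (μ.comap (↑)) (fun x : G₀ => f x) ∘ restrict G₀ = fourierTr μ f := by
  funext χ
  refine (integral_subtype_comap hG₀ fun g => f g * (starRingEnd ℂ) (χ g)).trans ?_
  refine setIntegral_eq_integral_of_forall_compl_eq_zero fun g hg => ?_
  rw [hf g hg, zero_mul]

end Restriction

end PontryaginDual

theorem gclass_subgroup_iff_extension_general
    [CommGroup G] [TopologicalSpace G] [IsTopologicalGroup G]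
    [LocallyCompactSpace G] [MeasurableSpace G] [BorelSpace G]
    (μ : Measure G)
    (W : Set G)
    (Q : Set (PontryaginDual G))
    (G₀ : Subgroup G) (hG₀open : IsOpen (G₀ : Set G))
    (h0 : G₀ → ℝ) (h : G → ℝ)
    (hext : ∀ g : G, h g = if hg : g ∈ G₀ then h0 ⟨g, hg⟩ else 0) :
    h0 ∈ gclass (μ.comap (Subtype.val : G₀ → G)) ((Subtype.val : G₀ → G) ⁻¹' W)
        {γ : PontryaginDual G₀ |
          ∀ χ : PontryaginDual G, (∀ g : G₀, χ (g : G) = γ g) → χ ∈ Q} ↔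
    h ∈ gclass μ W Q := by
  have hG₀ : IsClopen (G₀ : Set G) := ⟨G₀.isClosed_of_isOpen hG₀open, hG₀open⟩
  have hzero (g : G) (hg : g ∉ G₀) : h g = 0 := by rw [hext, dif_neg hg]
  obtain rfl : h0 = fun x : G₀ => h x := funext fun x => by rw [hext, dif_pos x.2]
  have hzeroC (g : G) (hg : g ∉ G₀) : (h g : ℂ) = 0 := by rw [hzero g hg, ofReal_zero]
  have hzeroPos (g : G) (hg : g ∉ G₀) : max (h g) 0 = 0 := by rw [hzero g hg, max_self]
  have hFsupp : tsupport (fourierTr μ fun g => (h g : ℂ)) =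
      PontryaginDual.restrict G₀ ⁻¹'
        tsupport (fourierTr (μ.comap (↑)) fun x : G₀ => (h x : ℂ)) := by
    rw [← PontryaginDual.fourierTr_comp_restrict μ hG₀open.measurableSet hzeroC,
      (PontryaginDual.isOpenQuotientMap_restrict hG₀open).isOpenMap.tsupport_comp_eq_preimage
        (PontryaginDual.restrict G₀).continuous]
  simp only [gclass, Set.mem_ofPred_eq]
  refine and_congr (hG₀.continuous_domRestrict_iff hzero) <|
    and_congr (isPosDefFn_restrict_iff (f := fun g => (h g : ℂ)) hzeroC) <|
    and_congr (integrable_comap_subtypeVal_iff hG₀open.measurableSet hzero) <|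
    and_congr Iff.rfl <| and_congr ?_ ?_
  · rw [hG₀.isClosed.tsupport_eq_image_tsupport_domRestrict hzeroPos, Set.image_subset_iff]
    rfl
  · rw [hFsupp, PontryaginDual.subset_setOf_extensions_mem_iff]

/-- a function `h⁰` on an open subgroup `G₀ ⊇ W` belongs to
`𝒢(W,Q*)_{G₀}` if and only if its trivial extension `h` belongs to `𝒢(W,Q)_G`. -/
theorem gclass_subgroup_iff_extension
    [CommGroup G] [TopologicalSpace G] [IsTopologicalGroup G]
    [LocallyCompactSpace G] [T2Space G] [MeasurableSpace G] [BorelSpace G]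
    (μ : Measure G) [μ.IsHaarMeasure]
    (W : Set G) (hWclosed : IsClosed W) (hWpos : 0 < μ W) (hWfin : μ W < ⊤)
    (Q : Set (PontryaginDual G)) (hQ : IsCompact Q)
    (G₀ : Subgroup G) (hG₀open : IsOpen (G₀ : Set G)) (hWG₀ : W ⊆ G₀)
    (h0 : G₀ → ℝ) (h : G → ℝ)
    (hext : ∀ g : G, h g = if hg : g ∈ G₀ then h0 ⟨g, hg⟩ else 0) :
    h0 ∈ gclass (μ.comap (Subtype.val : G₀ → G)) ((Subtype.val : G₀ → G) ⁻¹' W)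
        {γ : PontryaginDual G₀ |
          ∀ χ : PontryaginDual G, (∀ g : G₀, χ (g : G) = γ g) → χ ∈ Q} ↔
    h ∈ gclass μ W Q :=
  gclass_subgroup_iff_extension_general μ W Q G₀ hG₀open h0 h hext
end
end
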